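/- Let μ ∈ Δ⁺_l be a long positive root and let w ∈ W satisfy w(θ) = μ and have minimal length among all elements of W taking θ to μ. Then {w⁻¹(β) : β ∈ Π and (β, μ) = 0} = {α ∈ Π : w(α) ∈ Π and (α, θ) = 0}. -/

import Mathlib

open scoped InnerProductSpace

/-- An irreducible reduced crystallographic root system, spanning a finite-dimensional
real inner product space, together with a fixed base (set of simple roots) and the
coefficient function expressing each root in the base. -/
structure RootSystemData (V : Type) [NormedAddCommGroup V] [InnerProductSpace ℝ V]
    [FiniteDimensional ℝ V] where
  roots : Set V
  finite : roots.Finite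
  nonzero : ∀ γ ∈ roots, γ ≠ 0
  spans : Submodule.span ℝ roots = ⊤
  reflClosed : ∀ α ∈ roots, ∀ β ∈ roots, β - (2 * ⟪β, α⟫_ℝ / ⟪α, α⟫_ℝ) • α ∈ roots
  crystal : ∀ α ∈ roots, ∀ β ∈ roots, ∃ k : ℤ, 2 * ⟪β, α⟫_ℝ / ⟪α, α⟫_ℝ = (k : ℝ)
  reduced : ∀ α ∈ roots, ∀ t : ℝ, t • α ∈ roots → t = 1 ∨ t = -1
  irred : ∀ A B : Set V, roots = A ∪ B → (∀ a ∈ A, ∀ b ∈ B, ⟪a, b⟫_ℝ = 0) →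
    A = ∅ ∨ B = ∅
  simples : Finset V
  simples_sub : ↑simples ⊆ roots
  simples_indep : LinearIndependent ℝ (Subtype.val : {x : V // x ∈ simples} → V)
  coeff : V → V → ℤ
  coeff_spec : ∀ γ ∈ roots, γ = ∑ α ∈ simples, coeff γ α • α
  coeff_sign : ∀ γ ∈ roots, (∀ α ∈ simples, 0 ≤ coeff γ α) ∨ (∀ α ∈ simples, coeff γ α ≤ 0)

namespace RootSystemData

variable {V : Type} [NormedAddCommGroup V] [InnerProductSpace ℝ V] [FiniteDimensional ℝ V]
variable (R : RootSystemData V)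

/-- The set of positive roots `Δ⁺` (w.r.t. the base `simples`). -/
def posRoots : Set V := {γ | γ ∈ R.roots ∧ ∀ α ∈ R.simples, 0 ≤ R.coeff γ α}

/-- The partial order `μ ≼ ν`: `ν - μ` is a nonnegative integral combination of simple roots. -/
def rle (μ ν : V) : Prop := ∃ c : V → ℕ, ν - μ = ∑ α ∈ R.simples, (c α : ℤ) • α

/-- `θ` is the highest root. -/
def IsHighest (θ : V) : Prop := θ ∈ R.posRoots ∧ ∀ γ ∈ R.roots, R.rle γ θ

/-- `γ` is a long root: a root of maximal length. -/
def IsLong (γ : V) : Prop := γ ∈ R.roots ∧ ∀ γ' ∈ R.roots, ‖γ'‖ ≤ ‖γ‖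

/-- `I` is an upper ideal of `(Δ⁺, ≼)`. -/
def IsUpperIdeal (I : Set V) : Prop :=
  I ⊆ R.posRoots ∧ ∀ ν ∈ I, ∀ γ ∈ R.posRoots, R.rle ν γ → γ ∈ I

/-- `I` is an abelian upper ideal of `(Δ⁺, ≼)`. -/
def IsAbelianIdeal (I : Set V) : Prop :=
  R.IsUpperIdeal I ∧ ∀ γ₁ ∈ I, ∀ γ₂ ∈ I, γ₁ + γ₂ ∉ R.roots

/-- The set of minimal elements of `M ⊆ Δ⁺` w.r.t. `≼`. -/
def minSet (M : Set V) : Set V := {γ | γ ∈ M ∧ ∀ ν ∈ M, R.rle ν γ → ν = γ}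

/-- The set of maximal elements of `M ⊆ Δ⁺` w.r.t. `≼`. -/
def maxSet (M : Set V) : Set V := {γ | γ ∈ M ∧ ∀ ν ∈ M, R.rle γ ν → ν = γ}

/-- `S(I) = {α ∈ Π : ∃ γ ∈ min(I), γ - α ∈ Δ⁺ ∪ {0}}`; the complement `Π ∖ S(I)` is the
set of simple roots of the standard Levi subalgebra of the normaliser of the ideal `I`. -/
def normS (I : Set V) : Set V :=
  {α | α ∈ R.simples ∧ ∃ γ ∈ R.minSet I, (γ - α ∈ R.posRoots ∨ γ = α)}

/-- `H = {γ ∈ Δ⁺ : (γ, θ) ≠ 0}`. -/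
def Hset (θ : V) : Set V := {γ | γ ∈ R.posRoots ∧ ⟪γ, θ⟫_ℝ ≠ 0}

/-- `deg_S(γ) = Σ_{α ∈ S} [γ:α]`. -/
def degS (S : Finset V) (γ : V) : ℤ := ∑ α ∈ S, R.coeff γ α

/-- `I_S = {γ ∈ Δ⁺ : deg_S(γ) ≥ ⌊d(S)/2⌋ + 1}`, where `d(S) = deg_S(θ)`: the abelian ideal
`g(≥ ⌊hot(p)/2⌋ + 1)` associated with the standard parabolic subalgebra `p(S)`. -/
def idealS (S : Finset V) (θ : V) : Set V :=
  {γ | γ ∈ R.posRoots ∧ R.degS S θ / 2 + 1 ≤ R.degS S γ}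

/-- The highest root `θ` is fundamental with `α_θ` the unique simple root not
orthogonal to `θ`, and `(θ, α_θ∨) = 1`. -/
def IsFundamental (θ αθ : V) : Prop :=
  αθ ∈ R.simples ∧ ⟪θ, αθ⟫_ℝ ≠ 0 ∧ (∀ β ∈ R.simples, ⟪θ, β⟫_ℝ ≠ 0 → β = αθ) ∧
    2 * ⟪θ, αθ⟫_ℝ / ⟪αθ, αθ⟫_ℝ = 1

end RootSystemData

/-- The reflection `s_α`. -/
noncomputable def rsRefl {V : Type} [NormedAddCommGroup V] [InnerProductSpace ℝ V] (α x : V) : V :=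
  x - (2 * ⟪x, α⟫_ℝ / ⟪α, α⟫_ℝ) • α

/-- The element of the Weyl group given by the word `l = [α₁, …, α_m]`,
namely `s_{α₁} ∘ ⋯ ∘ s_{α_m}`; its inverse is `wordMap l.reverse`. -/
noncomputable def wordMap {V : Type} [NormedAddCommGroup V] [InnerProductSpace ℝ V] (l : List V) : V → V :=
  l.foldr (fun α f => rsRefl α ∘ f) id

/-!
Let `w` be the minimal word with `w θ = μ`. For `β ∈ Π` with `(β, μ) = 0`, the reflection `s_β`
fixes `μ`, so `γ = w⁻¹ β` is positive: otherwise the exchange condition shortens `s_β w`.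
Since `θ` is dominant and `(γ, θ) = 0`, every simple root `α` in the support of `γ` is orthogonal
to `θ`; then `s_α` fixes `θ` and minimality, via the exchange condition for `w s_α`, gives
`w α > 0`. Hence `1 = ht β = Σ [γ:α] ht (w α) ≥ ht γ`, so `γ` is simple. The other inclusion
only uses that `w` is an isometry.
-/

section Reflection

variable {V : Type} [NormedAddCommGroup V] [InnerProductSpace ℝ V]

lemma isLinearMap_rsRefl (α : V) : IsLinearMap ℝ (rsRefl α) where
  map_add x y := by
    simp only [rsRefl, inner_add_left]
    match_scalars <;> ring
  map_smul c x := by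
    simp only [rsRefl, real_inner_smul_left, smul_sub, smul_smul]
    match_scalars <;> ring

@[simp]
lemma rsRefl_zero_left (x : V) : rsRefl 0 x = x := by
  simp [rsRefl]

lemma rsRefl_inner (α x y : V) : ⟪rsRefl α x, rsRefl α y⟫_ℝ = ⟪x, y⟫_ℝ := by
  rcases eq_or_ne α 0 with rfl | hα
  · simp
  have hαα : ⟪α, α⟫_ℝ ≠ 0 := inner_self_ne_zero.mpr hα
  simp only [rsRefl, inner_sub_left, inner_sub_right, real_inner_smul_left,
    real_inner_smul_right, real_inner_comm α]
  field_simp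
  ring

@[simp]
lemma rsRefl_rsRefl (α x : V) : rsRefl α (rsRefl α x) = x := by
  rcases eq_or_ne α 0 with rfl | hα
  · simp
  have hαα : ⟪α, α⟫_ℝ ≠ 0 := inner_self_ne_zero.mpr hα
  simp only [rsRefl, inner_sub_left, real_inner_smul_left]
  match_scalars
  · ring
  · field_simp
    ring

lemma rsRefl_of_inner_eq_zero {α x : V} (h : ⟪x, α⟫_ℝ = 0) : rsRefl α x = x := by
  simp [rsRefl, h]

lemma rsRefl_rsRefl_conj (α y x : V) :
    rsRefl (rsRefl α y) x = rsRefl α (rsRefl y (rsRefl α x)) := by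
  have hxy : ⟪x, rsRefl α y⟫_ℝ = ⟪rsRefl α x, y⟫_ℝ := by
    rw [← rsRefl_inner α, rsRefl_rsRefl]
  have hyy : ⟪rsRefl α y, rsRefl α y⟫_ℝ = ⟪y, y⟫_ℝ := rsRefl_inner α y y
  have hlin := isLinearMap_rsRefl α
  calc rsRefl (rsRefl α y) x
      = x - (2 * ⟪rsRefl α x, y⟫_ℝ / ⟪y, y⟫_ℝ) • rsRefl α y := by
        rw [rsRefl, hxy, hyy]
    _ = rsRefl α (rsRefl α x - (2 * ⟪rsRefl α x, y⟫_ℝ / ⟪y, y⟫_ℝ) • y) := by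
        rw [hlin.map_sub, hlin.map_smul, rsRefl_rsRefl]
    _ = rsRefl α (rsRefl y (rsRefl α x)) := rfl

lemma wordMap_cons (a : V) (l : List V) (x : V) :
    wordMap (a :: l) x = rsRefl a (wordMap l x) := rfl

lemma wordMap_append (l₁ l₂ : List V) (x : V) :
    wordMap (l₁ ++ l₂) x = wordMap l₁ (wordMap l₂ x) := by
  induction l₁ with
  | nil => rfl
  | cons a t ih => rw [List.cons_append, wordMap_cons, wordMap_cons, ih]

@[simp]
lemma wordMap_reverse_wordMap (l : List V) (x : V) : wordMap l.reverse (wordMap l x) = x := by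
  induction l with
  | nil => rfl
  | cons a t ih =>
    rw [List.reverse_cons, wordMap_append, wordMap_cons]
    exact (congrArg _ (rsRefl_rsRefl a _)).trans ih

@[simp]
lemma wordMap_wordMap_reverse (l : List V) (x : V) : wordMap l (wordMap l.reverse x) = x := by
  simpa using wordMap_reverse_wordMap l.reverse x

lemma wordMap_inner (l : List V) (x y : V) : ⟪wordMap l x, wordMap l y⟫_ℝ = ⟪x, y⟫_ℝ := by
  induction l with
  | nil => rfl
  | cons a t ih => rw [wordMap_cons, wordMap_cons, rsRefl_inner, ih]

lemma isLinearMap_wordMap (l : List V) : IsLinearMap ℝ (wordMap l) := by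
  induction l with
  | nil => exact ⟨fun _ _ => rfl, fun _ _ => rfl⟩
  | cons a t ih =>
    exact ((IsLinearMap.mk' _ (isLinearMap_rsRefl a)).comp (IsLinearMap.mk' _ ih)).isLinear

lemma wordMap_sum_zsmul (l : List V) (s : Finset V) (f : V → ℤ) :
    wordMap l (∑ α ∈ s, f α • α) = ∑ α ∈ s, f α • wordMap l α := by
  simp only [← IsLinearMap.mk'_apply (isLinearMap_wordMap l), map_sum, map_zsmul]

end Reflection

namespace RootSystemData

open scoped Classical

variable {V : Type} [NormedAddCommGroup V] [InnerProductSpace ℝ V] [FiniteDimensional ℝ V]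
variable (R : RootSystemData V)

def IsSimpleWord (l : List V) : Prop := ∀ α ∈ l, α ∈ R.simples

def IsMinimalWord (θ : V) (l : List V) : Prop :=
  R.IsSimpleWord l ∧
    ∀ l' : List V, R.IsSimpleWord l' → wordMap l' θ = wordMap l θ → l.length ≤ l'.length

def height (γ : V) : ℤ := ∑ α ∈ R.simples, R.coeff γ α

variable {R}

lemma simple_mem_roots {α : V} (hα : α ∈ R.simples) : α ∈ R.roots := R.simples_sub hα

lemma simple_ne_zero {α : V} (hα : α ∈ R.simples) : α ≠ 0 := R.nonzero α (simple_mem_roots hα)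

lemma coeffs_eq_of_sum_zsmul_eq {d e : V → ℤ}
    (h : ∑ β ∈ R.simples, d β • β = ∑ β ∈ R.simples, e β • β) :
    ∀ β ∈ R.simples, d β = e β := by
  intro β hβ
  refine linearIndependent_iff'ₛ.mp (R.simples_indep.restrict_scalars' ℤ) Finset.univ
    (fun i => d i) (fun i => e i) ?_ ⟨β, hβ⟩ (Finset.mem_univ _)
  rwa [Finset.sum_coe_sort R.simples (fun x => d x • x),
    Finset.sum_coe_sort R.simples (fun x => e x • x)]

lemma coeff_eq_of_eq_sum {γ : V} (hγ : γ ∈ R.roots) {d : V → ℤ}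
    (h : γ = ∑ α ∈ R.simples, d α • α) : ∀ α ∈ R.simples, R.coeff γ α = d α :=
  coeffs_eq_of_sum_zsmul_eq ((R.coeff_spec γ hγ).symm.trans h)

lemma zsmul_simple_eq_sum {α : V} (hα : α ∈ R.simples) (k : ℤ) :
    k • α = ∑ β ∈ R.simples, (if β = α then k else 0) • β := by
  simp [ite_smul, hα]

lemma coeff_simple {α β : V} (hα : α ∈ R.simples) (hβ : β ∈ R.simples) :
    R.coeff α β = if β = α then 1 else 0 :=
  coeff_eq_of_eq_sum (simple_mem_roots hα) (by rw [← zsmul_simple_eq_sum hα, one_smul]) β hβ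

lemma height_simple {α : V} (hα : α ∈ R.simples) : R.height α = 1 := by
  rw [height, Finset.sum_congr rfl fun β hβ => coeff_simple hα hβ, Finset.sum_ite_eq' R.simples α,
    if_pos hα]

lemma simple_mem_posRoots {α : V} (hα : α ∈ R.simples) : α ∈ R.posRoots :=
  ⟨simple_mem_roots hα, fun β hβ => by rw [coeff_simple hα hβ]; split_ifs <;> norm_num⟩

lemma exists_coeff_ne_zero {γ : V} (hγ : γ ∈ R.roots) : ∃ α ∈ R.simples, R.coeff γ α ≠ 0 := by
  by_contra! h
  apply R.nonzero γ hγ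
  rw [R.coeff_spec γ hγ]
  exact Finset.sum_eq_zero fun α hα => by rw [h α hα, zero_smul]

lemma one_le_height {γ : V} (hγ : γ ∈ R.posRoots) : 1 ≤ R.height γ := by
  obtain ⟨α, hα, hne⟩ := exists_coeff_ne_zero hγ.1
  calc 1 ≤ R.coeff γ α := by have := hγ.2 α hα; omega
    _ ≤ R.height γ := Finset.single_le_sum hγ.2 hα

lemma eq_simple_of_coeff_eq_zero {γ α : V} (hγ : γ ∈ R.posRoots) (hα : α ∈ R.simples)
    (h : ∀ β ∈ R.simples, β ≠ α → R.coeff γ β = 0) : γ = α := by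
  have hγα : γ = R.coeff γ α • α := by
    conv_lhs => rw [R.coeff_spec γ hγ.1]
    exact Finset.sum_eq_single_of_mem α hα fun β hβ hβα => by rw [h β hβ hβα, zero_smul]
  have hroot : (R.coeff γ α : ℝ) • α ∈ R.roots := by
    rw [Int.cast_smul_eq_zsmul, ← hγα]
    exact hγ.1
  rcases R.reduced α (simple_mem_roots hα) _ hroot with h1 | h1
  · rw [hγα, show R.coeff γ α = 1 by exact_mod_cast h1, one_smul]
  · have : R.coeff γ α = -1 := by exact_mod_cast h1
    have := hγ.2 α hα
    omega

lemma mem_simples_of_height_le_one {γ : V} (hγ : γ ∈ R.posRoots) (h : R.height γ ≤ 1) :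
    γ ∈ R.simples := by
  obtain ⟨α, hα, hne⟩ := exists_coeff_ne_zero hγ.1
  have hnonneg : ∀ β ∈ R.simples.erase α, 0 ≤ R.coeff γ β :=
    fun β hβ => hγ.2 β (Finset.mem_of_mem_erase hβ)
  have hrest : ∑ β ∈ R.simples.erase α, R.coeff γ β = 0 := by
    have := Finset.add_sum_erase R.simples (R.coeff γ) hα
    have := Finset.sum_nonneg hnonneg
    have := hγ.2 α hα
    unfold height at h
    omega
  rwa [eq_simple_of_coeff_eq_zero hγ hα fun β hβ hβα =>
    (Finset.sum_eq_zero_iff_of_nonneg hnonneg).mp hrest β (Finset.mem_erase.mpr ⟨hβα, hβ⟩)]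

lemma height_eq_sum_mul {ρ : V} (hρ : ρ ∈ R.roots) {ι : Type*} (s : Finset ι) (c : ι → ℤ)
    (η : ι → V) (hη : ∀ i ∈ s, η i ∈ R.roots) (h : ρ = ∑ i ∈ s, c i • η i) :
    R.height ρ = ∑ i ∈ s, c i * R.height (η i) := by
  have hcoeff := coeff_eq_of_eq_sum hρ (d := fun δ => ∑ i ∈ s, c i * R.coeff (η i) δ) <| by
    rw [h, Finset.sum_congr rfl fun i hi => by rw [R.coeff_spec _ (hη i hi)]]
    simp only [Finset.smul_sum, smul_smul, Finset.sum_smul]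
    exact Finset.sum_comm
  rw [height, Finset.sum_congr rfl hcoeff, Finset.sum_comm]
  simp only [height, Finset.mul_sum]

lemma rsRefl_mem_posRoots {α γ : V} (hα : α ∈ R.simples) (hγ : γ ∈ R.posRoots) (hne : γ ≠ α) :
    rsRefl α γ ∈ R.posRoots := by
  obtain ⟨k, hk⟩ := R.crystal α (simple_mem_roots hα) γ hγ.1
  have hroot : rsRefl α γ ∈ R.roots := R.reflClosed α (simple_mem_roots hα) γ hγ.1
  have hcoeff := coeff_eq_of_eq_sum hroot
    (d := fun β => R.coeff γ β - if β = α then k else 0) <| by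
    rw [rsRefl, hk, Int.cast_smul_eq_zsmul, zsmul_simple_eq_sum hα]
    conv_lhs => rw [R.coeff_spec γ hγ.1]
    simp only [sub_smul, Finset.sum_sub_distrib]
  rcases R.coeff_sign _ hroot with hpos | hneg
  · exact ⟨hroot, hpos⟩
  · refine absurd (eq_simple_of_coeff_eq_zero hγ hα fun β hβ hβα => ?_) hne
    have := hneg β hβ
    rw [hcoeff β hβ, if_neg hβα, sub_zero] at this
    exact le_antisymm this (hγ.2 β hβ)

lemma IsHighest.inner_simple_nonneg {θ : V} (hθ : R.IsHighest θ) {α : V} (hα : α ∈ R.simples) :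
    0 ≤ ⟪α, θ⟫_ℝ := by
  obtain ⟨k, hk⟩ := R.crystal α (simple_mem_roots hα) θ hθ.1.1
  obtain ⟨c, hc⟩ := hθ.2 _ (R.reflClosed α (simple_mem_roots hα) θ hθ.1.1)
  rw [hk, sub_sub_cancel, Int.cast_smul_eq_zsmul, zsmul_simple_eq_sum hα] at hc
  have hk0 : (0 : ℝ) ≤ 2 * ⟪θ, α⟫_ℝ / ⟪α, α⟫_ℝ := by
    have := coeffs_eq_of_sum_zsmul_eq hc α hα
    rw [if_pos rfl] at this
    rw [hk, this]
    positivity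
  have hαα : 0 < ⟪α, α⟫_ℝ := real_inner_self_pos.mpr (simple_ne_zero hα)
  rw [real_inner_comm]
  have := mul_nonneg hk0 hαα.le
  rw [div_mul_cancel₀ _ hαα.ne'] at this
  linarith

lemma inner_eq_zero_of_coeff_ne_zero {θ : V} (hθ : ∀ α ∈ R.simples, 0 ≤ ⟪α, θ⟫_ℝ) {γ : V}
    (hγ : γ ∈ R.posRoots) (hγθ : ⟪γ, θ⟫_ℝ = 0) {α : V} (hα : α ∈ R.simples)
    (hc : R.coeff γ α ≠ 0) : ⟪α, θ⟫_ℝ = 0 := by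
  have hexp : ⟪γ, θ⟫_ℝ = ∑ β ∈ R.simples, (R.coeff γ β : ℝ) * ⟪β, θ⟫_ℝ := by
    conv_lhs => rw [R.coeff_spec γ hγ.1]
    simp only [sum_inner, ← Int.cast_smul_eq_zsmul ℝ, real_inner_smul_left]
  have hterm : ∀ β ∈ R.simples, 0 ≤ (R.coeff γ β : ℝ) * ⟪β, θ⟫_ℝ :=
    fun β hβ => mul_nonneg (by exact_mod_cast hγ.2 β hβ) (hθ β hβ)
  have := (Finset.sum_eq_zero_iff_of_nonneg hterm).mp (hexp ▸ hγθ) α hα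
  exact (mul_eq_zero.mp this).resolve_left (by exact_mod_cast hc)

lemma wordMap_mem_roots {l : List V} (hl : R.IsSimpleWord l) {γ : V} (hγ : γ ∈ R.roots) :
    wordMap l γ ∈ R.roots := by
  induction l with
  | nil => exact hγ
  | cons a t ih =>
    exact R.reflClosed a (simple_mem_roots (hl a List.mem_cons_self)) _
      (ih fun b hb => hl b (List.mem_cons_of_mem a hb))

lemma height_le_height_wordMap {l : List V} (hl : R.IsSimpleWord l) {γ : V}
    (hγ : γ ∈ R.posRoots)
    (hsupp : ∀ α ∈ R.simples, R.coeff γ α ≠ 0 → wordMap l α ∈ R.posRoots) :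
    R.height γ ≤ R.height (wordMap l γ) := by
  have hexp : wordMap l γ = ∑ α ∈ R.simples, R.coeff γ α • wordMap l α := by
    conv_lhs => rw [R.coeff_spec γ hγ.1]
    exact wordMap_sum_zsmul l R.simples (R.coeff γ)
  rw [height_eq_sum_mul (wordMap_mem_roots hl hγ.1) _ _ _
    (fun α hα => wordMap_mem_roots hl (simple_mem_roots hα)) hexp]
  refine Finset.sum_le_sum fun α hα => ?_
  rcases eq_or_ne (R.coeff γ α) 0 with hc | hc
  · simp [hc]
  · exact le_mul_of_one_le_right (hγ.2 α hα) (one_le_height (hsupp α hα hc))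

end RootSystemData

namespace RootSystemData

variable {V : Type} [NormedAddCommGroup V] [InnerProductSpace ℝ V] [FiniteDimensional ℝ V]
variable {R : RootSystemData V}

lemma exchange_left {l : List V} (hl : R.IsSimpleWord l) {β : V} (hβ : β ∈ R.posRoots)
    (hneg : wordMap l.reverse β ∉ R.posRoots) :
    ∃ l' : List V, R.IsSimpleWord l' ∧ l'.length + 1 = l.length ∧
      ∀ x, wordMap l' x = rsRefl β (wordMap l x) := by
  induction l generalizing β with
  | nil => exact absurd hβ hneg
  | cons a t ih =>
    have ha : a ∈ R.simples := hl a List.mem_cons_self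
    have ht : R.IsSimpleWord t := fun b hb => hl b (List.mem_cons_of_mem a hb)
    by_cases hβa : β = a
    · subst hβa
      exact ⟨t, ht, rfl, fun x => (rsRefl_rsRefl β _).symm⟩
    have hneg' : wordMap t.reverse (rsRefl a β) ∉ R.posRoots := by
      rwa [List.reverse_cons, wordMap_append] at hneg
    obtain ⟨t', ht', hlen, hmap⟩ := ih ht (rsRefl_mem_posRoots ha hβ hβa) hneg'
    refine ⟨a :: t', List.forall_mem_cons.mpr ⟨ha, ht'⟩, by simpa using hlen, fun x => ?_⟩
    -- `s_a ∘ s_{s_a β} = s_β ∘ s_a`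
    rw [wordMap_cons, hmap, rsRefl_rsRefl_conj, rsRefl_rsRefl, wordMap_cons]

lemma exchange_right {l : List V} (hl : R.IsSimpleWord l) {α : V} (hα : α ∈ R.simples)
    (hneg : wordMap l α ∉ R.posRoots) :
    ∃ l' : List V, R.IsSimpleWord l' ∧ l'.length + 1 = l.length ∧
      ∀ x, wordMap l' x = wordMap l (rsRefl α x) := by
  obtain ⟨t, ht, hlen, hmap⟩ := exchange_left (l := l.reverse)
    (fun a ha => hl a (List.mem_reverse.mp ha)) (simple_mem_posRoots hα) (by simpa using hneg)
  refine ⟨t.reverse, fun a ha => ht a (List.mem_reverse.mp ha), by simpa using hlen, fun x => ?_⟩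
  have hinv : wordMap t (wordMap l (rsRefl α x)) = x := by rw [hmap]; simp
  have := wordMap_reverse_wordMap t (wordMap l (rsRefl α x))
  rwa [hinv] at this

lemma IsMinimalWord.wordMap_reverse_mem_posRoots {θ : V} {l : List V}
    (hmin : R.IsMinimalWord θ l) {β : V} (hβ : β ∈ R.posRoots) (hβθ : ⟪β, wordMap l θ⟫_ℝ = 0) :
    wordMap l.reverse β ∈ R.posRoots := by
  by_contra hneg
  obtain ⟨l', hl', hlen, hmap⟩ := exchange_left hmin.1 hβ hneg
  have := hmin.2 l' hl' <| by rw [hmap, rsRefl_of_inner_eq_zero (by rwa [real_inner_comm])]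
  omega

lemma IsMinimalWord.wordMap_mem_posRoots {θ : V} {l : List V} (hmin : R.IsMinimalWord θ l)
    {α : V} (hα : α ∈ R.simples) (hαθ : ⟪α, θ⟫_ℝ = 0) : wordMap l α ∈ R.posRoots := by
  by_contra hneg
  obtain ⟨l', hl', hlen, hmap⟩ := exchange_right hmin.1 hα hneg
  have := hmin.2 l' hl' <| by rw [hmap, rsRefl_of_inner_eq_zero (by rwa [real_inner_comm])]
  omega

lemma IsMinimalWord.wordMap_reverse_mem_simples {θ : V} (hθ : ∀ α ∈ R.simples, 0 ≤ ⟪α, θ⟫_ℝ)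
    {l : List V} (hmin : R.IsMinimalWord θ l) {β : V} (hβ : β ∈ R.simples)
    (hβθ : ⟪β, wordMap l θ⟫_ℝ = 0) : wordMap l.reverse β ∈ R.simples := by
  set γ := wordMap l.reverse β
  have hγ : γ ∈ R.posRoots := hmin.wordMap_reverse_mem_posRoots (simple_mem_posRoots hβ) hβθ
  have hγθ : ⟪γ, θ⟫_ℝ = 0 := by
    rw [← wordMap_inner l, wordMap_wordMap_reverse, hβθ]
  refine mem_simples_of_height_le_one hγ ?_
  calc R.height γ
      ≤ R.height (wordMap l γ) := height_le_height_wordMap hmin.1 hγ fun α hα hc =>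
        hmin.wordMap_mem_posRoots hα (inner_eq_zero_of_coeff_ne_zero hθ hγ hγθ hα hc)
    _ = 1 := by rw [wordMap_wordMap_reverse, height_simple hβ]

end RootSystemData

theorem stmt2_general {V : Type} [NormedAddCommGroup V] [InnerProductSpace ℝ V] [FiniteDimensional ℝ V]
    (R : RootSystemData V) (θ μ : V) (hθ : R.IsHighest θ)
    (l : List V) (hl : ∀ α ∈ l, α ∈ R.simples) (hw : wordMap l θ = μ)
    (hmin : ∀ l' : List V, (∀ α ∈ l', α ∈ R.simples) → wordMap l' θ = μ →
      l.length ≤ l'.length) :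
    {x : V | ∃ β ∈ R.simples, ⟪β, μ⟫_ℝ = 0 ∧ x = wordMap l.reverse β}
      = {α : V | α ∈ R.simples ∧ wordMap l α ∈ R.simples ∧ ⟪α, θ⟫_ℝ = 0} := by
  have hminimal : R.IsMinimalWord θ l := ⟨hl, fun l' hl' h => hmin l' hl' (h.trans hw)⟩
  subst hw
  ext x
  constructor
  · rintro ⟨β, hβ, hβμ, rfl⟩
    refine ⟨hminimal.wordMap_reverse_mem_simples (fun _ => hθ.inner_simple_nonneg) hβ hβμ,
      by rwa [wordMap_wordMap_reverse], ?_⟩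
    rw [← wordMap_inner l, wordMap_wordMap_reverse, hβμ]
  · rintro ⟨hx, hwx, hxθ⟩
    exact ⟨wordMap l x, hwx, by rw [wordMap_inner, hxθ], (wordMap_reverse_wordMap l x).symm⟩

/-- part of Theorem 2.4(i): for a long positive root `μ` and the minimal
length element `w ∈ W` with `w(θ) = μ`, one has
`{w⁻¹(β) : β ∈ Π, (β, μ) = 0} = {α ∈ Π : w(α) ∈ Π and (α, θ) = 0}`. -/
theorem stmt2 {V : Type} [NormedAddCommGroup V] [InnerProductSpace ℝ V] [FiniteDimensional ℝ V]
    (R : RootSystemData V) (θ μ : V) (hθ : R.IsHighest θ)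
    (hμpos : μ ∈ R.posRoots) (hμlong : R.IsLong μ)
    (l : List V) (hl : ∀ α ∈ l, α ∈ R.simples) (hw : wordMap l θ = μ)
    (hmin : ∀ l' : List V, (∀ α ∈ l', α ∈ R.simples) → wordMap l' θ = μ →
      l.length ≤ l'.length) :
    {x : V | ∃ β ∈ R.simples, ⟪β, μ⟫_ℝ = 0 ∧ x = wordMap l.reverse β}
      = {α : V | α ∈ R.simples ∧ wordMap l α ∈ R.simples ∧ ⟪α, θ⟫_ℝ = 0} :=
  stmt2_general R θ μ hθ l hl hw hmin
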